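/- arXiv:1504.06231 — 3 statements merged into one kernel-verified Lean document; each statement's English description precedes it below -/
import Mathlib

section
/- For μ > 0, Δ > 0, n ≥ 1, and p = e^{-μΔ}, the normalized expected number of D2D repairs per time unit, (1/Δ)·Σ_{i=r}^{n}(n-i)·C(n,i)p^i(1-p)^{n-i}, tends to n·μ as Δ → 0⁺, for any fixed r with 0 ≤ r ≤ n-1. -/
/-!
Write `p = e^{-μΔ}` and `q = 1 - p`, so that `q / Δ → μ` (the derivative of `1 - e^{-μΔ}` at `0`)
while `p → 1` and `q → 0`. In the `i`-th summand the factor `(n - i) q^{n-i} / Δ` therefore tends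
to `μ` when `n - i = 1` and to `0` otherwise, so only the summand `i = n - 1`, present because
`r ≤ n - 1`, survives in the limit, and it contributes `C(n, n-1) μ = n μ`.
-/

open Finset Filter Topology Real

lemma tendsto_one_sub_exp_neg_mul_div (μ : ℝ) :
    Tendsto (fun Δ : ℝ => (1 - exp (-μ * Δ)) / Δ) (𝓝[≠] 0) (𝓝 μ) := by
  have hderiv : HasDerivAt (fun Δ : ℝ => 1 - exp (-μ * Δ)) μ 0 := by
    simpa using (((hasDerivAt_id (0 : ℝ)).const_mul (-μ)).exp).const_sub 1
  simpa [div_eq_inv_mul] using hderiv.tendsto_slope_zero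

lemma tendsto_one_sub_exp_neg_mul_pow_succ_div (μ : ℝ) (k : ℕ) :
    Tendsto (fun Δ : ℝ => (1 - exp (-μ * Δ)) ^ (k + 1) / Δ) (𝓝[≠] 0) (𝓝 (0 ^ k * μ)) := by
  have hq : Tendsto (fun Δ : ℝ => 1 - exp (-μ * Δ)) (𝓝[≠] 0) (𝓝 0) := by
    have hcont : Continuous fun Δ : ℝ => 1 - exp (-μ * Δ) := by fun_prop
    simpa using (hcont.tendsto 0).mono_left nhdsWithin_le_nhds
  refine ((hq.pow k).mul (tendsto_one_sub_exp_neg_mul_div μ)).congr fun Δ => ?_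
  rw [pow_succ, mul_div_assoc]

lemma tendsto_natCast_mul_one_sub_exp_neg_mul_pow_div (μ : ℝ) (m : ℕ) :
    Tendsto (fun Δ : ℝ => m * (1 - exp (-μ * Δ)) ^ m / Δ) (𝓝[≠] 0)
      (𝓝 (if m = 1 then μ else 0)) := by
  rcases m with _ | k
  · simp
  · have h := (tendsto_one_sub_exp_neg_mul_pow_succ_div μ k).const_mul ((k + 1 : ℕ) : ℝ)
    convert h using 2 with Δ
    · rw [mul_div_assoc]
    · rcases k with _ | k <;> simp

theorem d2d_repair_rate_limit_general (n r : ℕ) (hn : 1 ≤ n) (hr : r ≤ n - 1) (μ : ℝ) :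
    Tendsto (fun Δ : ℝ => (1 / Δ) *
        ∑ i ∈ Finset.Icc r n, ((n : ℝ) - i) * (n.choose i) *
          Real.exp (-μ * Δ) ^ i * (1 - Real.exp (-μ * Δ)) ^ (n - i))
      (nhdsWithin 0 (Set.Ioi 0)) (𝓝 ((n : ℝ) * μ)) := by
  have hp : Tendsto (fun Δ : ℝ => exp (-μ * Δ)) (𝓝[≠] 0) (𝓝 1) := by
    have hcont : Continuous fun Δ : ℝ => exp (-μ * Δ) := by fun_prop
    simpa using (hcont.tendsto 0).mono_left nhdsWithin_le_nhds
  have hterm (i : ℕ) : Tendsto (fun Δ : ℝ => n.choose i * exp (-μ * Δ) ^ i *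
      ((n - i : ℕ) * (1 - exp (-μ * Δ)) ^ (n - i) / Δ)) (𝓝[≠] 0)
      (𝓝 (n.choose i * 1 ^ i * if n - i = 1 then μ else 0)) :=
    (tendsto_const_nhds.mul (hp.pow i)).mul (tendsto_natCast_mul_one_sub_exp_neg_mul_pow_div μ _)
  have hlimit : ∑ i ∈ Icc r n, (n.choose i * 1 ^ i * if n - i = 1 then μ else 0) = n * μ := by
    rw [sum_eq_single_of_mem (n - 1) (mem_Icc.mpr ⟨hr, n.sub_le 1⟩)]
    · simp [Nat.sub_sub_self hn, Nat.choose_symm hn]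
    · intro i hi hne
      have hgap : n - i ≠ 1 := by grind
      simp [hgap]
  rw [← hlimit]
  refine ((tendsto_finsetSum _ fun i _ => hterm i).mono_left (nhdsGT_le_nhdsNE 0)).congr'
    (eventually_nhdsWithin_of_forall fun Δ _ => ?_)
  dsimp only
  rw [mul_sum]
  refine sum_congr rfl fun i hi => ?_
  rw [Nat.cast_sub (mem_Icc.mp hi).2]
  ring

/-- The normalized expected number of D2D repairs per time unit tends to `nμ` as `Δ → 0⁺`,
for any fixed repair access `r` with `0 ≤ r ≤ n-1`. -/
theorem d2d_repair_rate_limit (n r : ℕ) (hn : 1 ≤ n) (hr : r ≤ n - 1) (μ : ℝ) (hμ : 0 < μ) :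
    Tendsto (fun Δ : ℝ => (1 / Δ) *
        ∑ i ∈ Finset.Icc r n, ((n : ℝ) - i) * (n.choose i) *
          Real.exp (-μ * Δ) ^ i * (1 - Real.exp (-μ * Δ)) ^ (n - i))
      (nhdsWithin 0 (Set.Ioi 0)) (𝓝 ((n : ℝ) * μ)) :=
  d2d_repair_rate_limit_general n r hn hr μ
end

section
/- Let S_h = Σ_{i=h}^n T_i be a sum of independent exponential random variables with distinct rates μ_i = iμ (μ > 0). Then for Δ > 0, (1/Δ)·E[min(S_h, Δ)] = (1/Δ)·Σ_{i=h}^n ((1 - e^{-μ_i Δ})/μ_i) ∏_{j=h, j≠i}^n μ_j/(μ_j - μ_i). Equivalently, if W is uniform on [0,Δ) independent of S_h, then P(W < S_h) equals this expression. -/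
/-!
Let `c_i = ∏_{j ≠ i} r_j / (r_j - r_i)`. By induction on the index set, the law of
`∑_{i ∈ s} T_i` has the hypoexponential CDF `1 - ∑_i c_i e^{-r_i t}` on `t ≥ 0`: adding an
independent `Exp(r_a)` summand convolves the law with the density `r_a e^{-r_a x}`, one explicit
integration reproduces the same shape for `insert a s`, and the coefficient of the new rate
`r_a` is fixed by the Lagrange identity `∑_i c_i = 1`. The layer-cake formula
`E[min(S, Δ)] = ∫_0^Δ P(S > t) dt` then turns the tail `∑_i c_i e^{-r_i t}` into the claimed sum.
-/

open Finset MeasureTheory ProbabilityTheory Real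

section Hypoexponential

variable {F ι : Type*} [Field F] [DecidableEq ι] {r : ι → F} {s : Finset ι} {a i : ι}

def hypoexpCoeff (r : ι → F) (s : Finset ι) (i : ι) : F :=
  ∏ j ∈ s.erase i, r j / (r j - r i)

theorem sum_hypoexpCoeff (hs : s.Nonempty) (hr : Set.InjOn r s) :
    ∑ i ∈ s, hypoexpCoeff r s i = 1 := by
  have h := congrArg (Polynomial.eval 0) (Lagrange.sum_basis hr hs)
  rw [Polynomial.eval_finsetSum, Polynomial.eval_one] at h
  rw [← h]
  refine sum_congr rfl fun i _ => ?_
  simp only [hypoexpCoeff, Lagrange.basis, Lagrange.basisDivisor, Polynomial.eval_prod,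
    Polynomial.eval_mul, Polynomial.eval_C, Polynomial.eval_sub, Polynomial.eval_X, zero_sub]
  refine prod_congr rfl fun j _ => ?_
  rw [div_eq_mul_inv, ← neg_sub, inv_neg]
  ring

theorem hypoexpCoeff_insert_of_mem (ha : a ∉ s) (hi : i ∈ s) :
    hypoexpCoeff r (insert a s) i = r a / (r a - r i) * hypoexpCoeff r s i := by
  rw [hypoexpCoeff, erase_insert_of_ne (ne_of_mem_of_not_mem hi ha).symm,
    prod_insert fun h => ha (mem_of_mem_erase h), hypoexpCoeff]

theorem hypoexpCoeff_insert_self (ha : a ∉ s) (hr : Set.InjOn r ↑(insert a s)) :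
    hypoexpCoeff r (insert a s) a = 1 - ∑ i ∈ s, r a / (r a - r i) * hypoexpCoeff r s i := by
  rw [← sum_hypoexpCoeff (insert_nonempty a s) hr, sum_insert ha,
    sum_congr rfl fun i hi => hypoexpCoeff_insert_of_mem (r := r) ha hi]
  ring

noncomputable def hypoexpCDF (r : ι → ℝ) (s : Finset ι) (t : ℝ) : ℝ :=
  1 - ∑ i ∈ s, hypoexpCoeff r s i * exp (-r i * t)

end Hypoexponential

theorem intervalIntegral_exp_neg_mul {r : ℝ} (hr : r ≠ 0) (t : ℝ) :
    ∫ x in 0..t, exp (-r * x) = (1 - exp (-r * t)) / r := by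
  rw [intervalIntegral.integral_comp_mul_left (fun x => exp x) (neg_ne_zero.2 hr), integral_exp]
  simp only [mul_zero, exp_zero, smul_eq_mul]
  field_simp
  ring

theorem intervalIntegral_mul_exp_mul_exp {r q : ℝ} (hrq : r ≠ q) (t : ℝ) :
    ∫ x in 0..t, r * exp (-r * x) * exp (-q * (t - x)) =
      r / (r - q) * (exp (-q * t) - exp (-r * t)) := by
  have hqr : q - r ≠ 0 := sub_ne_zero.2 hrq.symm
  have hderiv : ∀ x ∈ Set.uIcc 0 t,
      HasDerivAt (fun x => r / (q - r) * exp (x * (q - r) - q * t))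
        (r * exp (-r * x) * exp (-q * (t - x))) x := fun x _ =>
    ((((hasDerivAt_mul_const (q - r)).sub_const (q * t)).exp).const_mul (r / (q - r))).congr_deriv
      (by rw [mul_assoc r, ← exp_add]; field_simp; ring_nf)
  rw [intervalIntegral.integral_eq_sub_of_hasDerivAt hderiv
    (by apply Continuous.intervalIntegrable; fun_prop)]
  field_simp [sub_ne_zero.2 hrq]
  ring_nf

theorem intervalIntegral_mul_exp_mul_hypoexpCDF {ι : Type*} [DecidableEq ι] {r : ι → ℝ}
    {s : Finset ι} {a : ι} (ha : a ∉ s) (hra : r a ≠ 0) (hr : Set.InjOn r ↑(insert a s))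
    (t : ℝ) :
    ∫ x in 0..t, r a * exp (-r a * x) * hypoexpCDF r s (t - x) = hypoexpCDF r (insert a s) t := by
  have hne : ∀ i ∈ s, r a ≠ r i := fun i hi h =>
    ha (hr (mem_insert_self a s) (mem_insert_of_mem hi) h ▸ hi)
  have hsplit : ∀ x, r a * exp (-r a * x) * hypoexpCDF r s (t - x) = r a * exp (-r a * x) -
      ∑ i ∈ s, hypoexpCoeff r s i * (r a * exp (-r a * x) * exp (-r i * (t - x))) := by
    intro x
    rw [hypoexpCDF, mul_sub, mul_one, mul_sum]
    exact congrArg _ (sum_congr rfl fun _ _ => by ring)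
  have hcoeff : ∑ i ∈ s, hypoexpCoeff r (insert a s) i * exp (-r i * t) =
      ∑ i ∈ s, r a / (r a - r i) * hypoexpCoeff r s i * exp (-r i * t) :=
    sum_congr rfl fun i hi => by rw [hypoexpCoeff_insert_of_mem ha hi]
  have hregroup :
      ∑ i ∈ s, hypoexpCoeff r s i * (r a / (r a - r i) * (exp (-r i * t) - exp (-r a * t))) =
        ∑ i ∈ s, r a / (r a - r i) * hypoexpCoeff r s i * exp (-r i * t) -
          (∑ i ∈ s, r a / (r a - r i) * hypoexpCoeff r s i) * exp (-r a * t) := by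
    rw [sum_mul, ← sum_sub_distrib]
    exact sum_congr rfl fun _ _ => by ring
  simp_rw [hsplit]
  rw [intervalIntegral.integral_sub (by apply Continuous.intervalIntegrable; fun_prop)
      (by apply Continuous.intervalIntegrable; fun_prop),
    intervalIntegral.integral_finsetSum fun i _ => by
      apply Continuous.intervalIntegrable; fun_prop,
    intervalIntegral.integral_const_mul, intervalIntegral_exp_neg_mul hra,
    sum_congr rfl fun i hi => by
      rw [intervalIntegral.integral_const_mul, intervalIntegral_mul_exp_mul_exp (hne i hi)],
    hypoexpCDF, sum_insert ha, hypoexpCoeff_insert_self ha hr, mul_div_cancel₀ _ hra, hcoeff,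
    hregroup]
  ring

theorem integral_expMeasure_eq_intervalIntegral {r t : ℝ} (hr : 0 < r) (ht : 0 ≤ t) {g : ℝ → ℝ}
    (hg : ∀ x, t < x → g x = 0) :
    ∫ x, g x ∂expMeasure r = ∫ x in 0..t, r * exp (-r * x) * g x := by
  have hsupp : ∀ x ∉ Set.Icc 0 t, (gammaPDF 1 r x).toReal • g x = 0 := by
    intro x hx
    rcases lt_or_ge x 0 with hneg | hnonneg
    · simp [gammaPDF_of_neg hneg]
    · simp [hg x (lt_of_not_ge fun hxt => hx ⟨hnonneg, hxt⟩)]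
  rw [expMeasure, gammaMeasure, integral_withDensity_eq_integral_toReal_smul (f := gammaPDF 1 r)
    (measurable_gammaPDFReal 1 r).ennreal_ofReal (ae_of_all _ fun _ => ENNReal.ofReal_lt_top),
    intervalIntegral.integral_of_le ht, ← integral_Icc_eq_integral_Ioc,
    ← setIntegral_eq_integral_of_forall_compl_eq_zero hsupp]
  refine setIntegral_congr_fun measurableSet_Icc fun x hx => ?_
  rw [gammaPDF_eq, if_pos hx.1]
  simp only [rpow_one, Gamma_one, div_one, sub_self, rpow_zero, mul_one]
  rw [ENNReal.toReal_ofReal (by positivity), smul_eq_mul, neg_mul]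

theorem ae_nonneg_expMeasure (r : ℝ) : ∀ᵐ x ∂expMeasure r, 0 ≤ x := by
  simp only [ae_iff, not_le]
  change expMeasure r (Set.Iio 0) = 0
  rw [expMeasure, gammaMeasure, withDensity_apply _ measurableSet_Iio]
  exact lintegral_exponentialPDF_of_nonpos le_rfl

theorem cdf_eq_zero_of_ae_nonneg {ν : Measure ℝ} [IsProbabilityMeasure ν] (hν : ∀ᵐ y ∂ν, 0 ≤ y)
    {x : ℝ} (hx : x < 0) : cdf ν x = 0 := by
  rw [cdf_eq_real, measureReal_eq_zero_iff]
  exact measure_mono_null (fun y hy => not_le.2 (lt_of_le_of_lt hy hx)) (ae_iff.1 hν)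

theorem cdf_expMeasure_conv {r t : ℝ} (hr : 0 < r) (ht : 0 ≤ t) (ν : Measure ℝ)
    [IsProbabilityMeasure ν] (hν : ∀ᵐ y ∂ν, 0 ≤ y) :
    cdf (expMeasure r ∗ ν) t = ∫ x in 0..t, r * exp (-r * x) * cdf ν (t - x) := by
  have := isProbabilityMeasure_expMeasure hr
  calc cdf (expMeasure r ∗ ν) t = ∫ z, (Set.Iic t).indicator 1 z ∂(expMeasure r ∗ ν) := by
        rw [cdf_eq_real, integral_indicator_one measurableSet_Iic]
    _ = ∫ x, ∫ y, (Set.Iic t).indicator 1 (x + y) ∂ν ∂expMeasure r :=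
        integral_conv ((integrable_const 1).indicator measurableSet_Iic)
    _ = ∫ x, cdf ν (t - x) ∂expMeasure r := by
        congr 1 with x
        rw [cdf_eq_real, ← integral_indicator_one measurableSet_Iic]
        congr with y
        simp [Set.indicator_apply, le_sub_iff_add_le']
    _ = _ := integral_expMeasure_eq_intervalIntegral hr ht fun x hx =>
        cdf_eq_zero_of_ae_nonneg hν (sub_neg.2 hx)

theorem integral_min_eq_intervalIntegral_one_sub_cdf (ν : Measure ℝ) [IsProbabilityMeasure ν]
    (hν : ∀ᵐ y ∂ν, 0 ≤ y) {Δ : ℝ} (hΔ : 0 ≤ Δ) :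
    ∫ y, min y Δ ∂ν = ∫ t in 0..Δ, (1 - cdf ν t) := by
  have hint : Integrable (fun y => min y Δ) ν :=
    (integrable_const Δ).mono' (by fun_prop) <| hν.mono fun y hy => by
      rw [norm_eq_abs, abs_of_nonneg (le_min hy hΔ)]
      exact min_le_right y Δ
  rw [hint.integral_eq_integral_meas_lt (hν.mono fun y hy => le_min hy hΔ),
    intervalIntegral.integral_of_le hΔ, integral_Ioc_eq_integral_Ioo,
    setIntegral_eq_of_subset_of_forall_sdiff_eq_zero measurableSet_Ioi Set.Ioo_subset_Ioi_self]
  · refine setIntegral_congr_fun measurableSet_Ioo fun t ht => ?_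
    have : {y | t < min y Δ} = (Set.Iic t)ᶜ := by
      ext y
      simp [ht.2]
    rw [this, probReal_compl_eq_one_sub measurableSet_Iic, cdf_eq_real]
  · rintro t ⟨ht0, htΔ⟩
    have hΔt : Δ ≤ t := le_of_not_gt fun h => htΔ ⟨ht0, h⟩
    have : {y | t < min y Δ} = ∅ :=
      Set.eq_empty_of_forall_notMem fun y hy => (hy.trans_le (min_le_right y Δ)).not_ge hΔt
    rw [this, measureReal_empty]

section SumOfExponentials

variable {Ω ι : Type*} [MeasurableSpace Ω] {P : Measure Ω} {T : ι → Ω → ℝ} {r : ι → ℝ}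
  {s : Finset ι}

theorem ae_nonneg_map_sum (hmeas : ∀ i, Measurable (T i))
    (hlaw : ∀ i ∈ s, P.map (T i) = expMeasure (r i)) :
    ∀ᵐ y ∂P.map (fun ω => ∑ i ∈ s, T i ω), 0 ≤ y := by
  rw [ae_map_iff (Finset.measurable_sum s fun i _ => hmeas i).aemeasurable measurableSet_Ici]
  have hT : ∀ i ∈ s, ∀ᵐ ω ∂P, 0 ≤ T i ω := fun i hi =>
    ae_of_ae_map (hmeas i).aemeasurable (hlaw i hi ▸ ae_nonneg_expMeasure (r i))
  filter_upwards [(s.eventually_all).2 hT] with ω hω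
  exact sum_nonneg hω

theorem map_sum_insert_eq_conv [IsFiniteMeasure P] [DecidableEq ι]
    (hmeas : ∀ i, Measurable (T i)) (hindep : iIndepFun T P) {a : ι} (ha : a ∉ s) :
    P.map (fun ω => ∑ i ∈ insert a s, T i ω) = P.map (T a) ∗ P.map fun ω => ∑ i ∈ s, T i ω := by
  have hind : IndepFun (T a) (fun ω => ∑ i ∈ s, T i ω) P := by
    simpa only [Finset.sum_fn] using (hindep.indepFun_finsetSum_of_notMem hmeas ha).symm
  simp_rw [sum_insert ha]
  exact hind.map_add_eq_map_conv_map (hmeas a) (Finset.measurable_sum s fun i _ => hmeas i)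

variable [IsProbabilityMeasure P] [DecidableEq ι]

theorem cdf_map_sum_eq_hypoexpCDF (hmeas : ∀ i, Measurable (T i)) (hindep : iIndepFun T P)
    (hpos : ∀ i ∈ s, 0 < r i) (hinj : Set.InjOn r s)
    (hlaw : ∀ i ∈ s, P.map (T i) = expMeasure (r i)) {t : ℝ} (ht : 0 ≤ t) :
    cdf (P.map fun ω => ∑ i ∈ s, T i ω) t = hypoexpCDF r s t := by
  induction s using Finset.induction_on generalizing t with
  | empty => simp [hypoexpCDF, Measure.map_const, cdf_eq_real, measureReal_def, ht]
  | @insert a s ha ih =>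
    have hlaw' : ∀ i ∈ s, P.map (T i) = expMeasure (r i) := fun i hi =>
      hlaw i (mem_insert_of_mem hi)
    have hcdf : Set.EqOn
        (fun x => r a * exp (-r a * x) * cdf (P.map fun ω => ∑ i ∈ s, T i ω) (t - x))
        (fun x => r a * exp (-r a * x) * hypoexpCDF r s (t - x)) (Set.uIcc 0 t) := fun x hx => by
      rw [Set.uIcc_of_le ht] at hx
      dsimp only
      rw [ih (fun i hi => hpos i (mem_insert_of_mem hi))
        (hinj.mono (coe_subset.2 (subset_insert a s))) hlaw' (sub_nonneg.2 hx.2)]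
    have := Measure.isProbabilityMeasure_map (μ := P)
      (Finset.measurable_sum s fun i _ => hmeas i).aemeasurable
    rw [map_sum_insert_eq_conv hmeas hindep ha, hlaw a (mem_insert_self a s),
      cdf_expMeasure_conv (hpos a (mem_insert_self a s)) ht _ (ae_nonneg_map_sum hmeas hlaw'),
      intervalIntegral.integral_congr hcdf,
      intervalIntegral_mul_exp_mul_hypoexpCDF ha (hpos a (mem_insert_self a s)).ne' hinj]

theorem integral_min_sum_eq_sum_hypoexpCoeff (hmeas : ∀ i, Measurable (T i))
    (hindep : iIndepFun T P) (hpos : ∀ i ∈ s, 0 < r i) (hinj : Set.InjOn r s)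
    (hlaw : ∀ i ∈ s, P.map (T i) = expMeasure (r i)) {Δ : ℝ} (hΔ : 0 ≤ Δ) :
    ∫ ω, min (∑ i ∈ s, T i ω) Δ ∂P =
      ∑ i ∈ s, (1 - exp (-r i * Δ)) / r i * hypoexpCoeff r s i := by
  have htail : Set.EqOn (fun t => 1 - cdf (P.map fun ω => ∑ i ∈ s, T i ω) t)
      (fun t => ∑ i ∈ s, hypoexpCoeff r s i * exp (-r i * t)) (Set.uIcc 0 Δ) := fun t ht => by
    rw [Set.uIcc_of_le hΔ] at ht
    dsimp only
    rw [cdf_map_sum_eq_hypoexpCDF hmeas hindep hpos hinj hlaw ht.1, hypoexpCDF, sub_sub_cancel]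
  have hsum : Measurable fun ω => ∑ i ∈ s, T i ω := Finset.measurable_sum s fun i _ => hmeas i
  have := Measure.isProbabilityMeasure_map (μ := P) hsum.aemeasurable
  rw [show ∫ ω, min (∑ i ∈ s, T i ω) Δ ∂P = ∫ y, min y Δ ∂P.map fun ω => ∑ i ∈ s, T i ω from
      (integral_map (f := fun y => min y Δ) hsum.aemeasurable (by fun_prop)).symm,
    integral_min_eq_intervalIntegral_one_sub_cdf _ (ae_nonneg_map_sum hmeas hlaw) hΔ,
    intervalIntegral.integral_congr htail, intervalIntegral.integral_finsetSum fun i _ => by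
      apply Continuous.intervalIntegrable; fun_prop]
  refine sum_congr rfl fun i hi => ?_
  rw [intervalIntegral.integral_const_mul, intervalIntegral_exp_neg_mul (hpos i hi).ne', mul_comm]

end SumOfExponentials

theorem download_probability_formula_general {Ω : Type*} [MeasureSpace Ω]
    [IsProbabilityMeasure (ℙ : Measure Ω)]
    (n h : ℕ) (hh : 1 ≤ h) (μ : ℝ) (hμ : 0 < μ)
    (T : ℕ → Ω → ℝ) (hmeas : ∀ i, Measurable (T i))
    (hindep : iIndepFun T ℙ)
    (hdist : ∀ i ∈ Finset.Icc h n, Measure.map (T i) ℙ = expMeasure ((i : ℝ) * μ))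
    (Δ : ℝ) (hΔ : 0 < Δ) :
    (1 / Δ) * ∫ ω, min (∑ i ∈ Finset.Icc h n, T i ω) Δ ∂ℙ =
      (1 / Δ) * ∑ i ∈ Finset.Icc h n,
        ((1 - Real.exp (-((i : ℝ) * μ) * Δ)) / ((i : ℝ) * μ)) *
          ∏ j ∈ (Finset.Icc h n).erase i,
            ((j : ℝ) * μ) / ((j : ℝ) * μ - (i : ℝ) * μ) := by
  have hpos : ∀ i ∈ Icc h n, 0 < (i : ℝ) * μ := fun i hi =>
    mul_pos (Nat.cast_pos.2 (hh.trans (mem_Icc.1 hi).1)) hμ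
  have hinj : Set.InjOn (fun i : ℕ => (i : ℝ) * μ) (Icc h n) := fun i _ j _ hij => by
    exact_mod_cast mul_right_cancel₀ hμ.ne' hij
  rw [integral_min_sum_eq_sum_hypoexpCoeff hmeas hindep hpos hinj hdist hΔ.le]
  rfl

/-- For `S_h = Σ_{i=h}^n T_i` a sum of independent exponential random variables with
distinct rates `μ_i = iμ`, the D2D download probability
`(1/Δ)E[min(S_h, Δ)]` equals `(1/Δ) Σ_{i=h}^n ((1-e^{-μ_i Δ})/μ_i) ∏_{j≠i} μ_j/(μ_j-μ_i)`. -/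
theorem download_probability_formula {Ω : Type*} [MeasureSpace Ω]
    [IsProbabilityMeasure (ℙ : Measure Ω)]
    (n h : ℕ) (hh : 1 ≤ h) (hhn : h ≤ n) (μ : ℝ) (hμ : 0 < μ)
    (T : ℕ → Ω → ℝ) (hmeas : ∀ i, Measurable (T i))
    (hindep : iIndepFun T ℙ)
    (hdist : ∀ i ∈ Finset.Icc h n, Measure.map (T i) ℙ = expMeasure ((i : ℝ) * μ))
    (Δ : ℝ) (hΔ : 0 < Δ) :
    (1 / Δ) * ∫ ω, min (∑ i ∈ Finset.Icc h n, T i ω) Δ ∂ℙ =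
      (1 / Δ) * ∑ i ∈ Finset.Icc h n,
        ((1 - Real.exp (-((i : ℝ) * μ) * Δ)) / ((i : ℝ) * μ)) *
          ∏ j ∈ (Finset.Icc h n).erase i,
            ((j : ℝ) * μ) / ((j : ℝ) * μ - (i : ℝ) * μ) :=
  download_probability_formula_general n h hh μ hμ T hmeas hindep hdist Δ hΔ
end

section
/- For fixed t ∈ [0, Δ) and ω, Δ > 0, the density f_{W̃_l}(t) = Σ_{i=0}^∞ ω^l (t + iΔ)^{l-1} e^{-ω(t+iΔ)}/(l-1)! converges to 1/Δ as l → ∞; i.e., the time of the l-th request, reduced modulo the repair interval, becomes asymptotically uniform. -/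
/-!
The Erlang density `f` of shape `n + 1` and rate `ω` is unimodal on `[0, ∞)`, with mode `n / ω`,
and has total mass one. For a unimodal function, the Riemann sum `Δ ∑ f (t + i Δ)` with `t ∈ [0, Δ]`
differs from `∫₀^∞ f` by at most `2 Δ max f`. By Stirling's formula the peak value
`max f = ω nⁿ e⁻ⁿ / n!` is at most `ω / √(2πn)`, so the error vanishes as `n → ∞`.
-/

open Filter Topology MeasureTheory Set Real
open scoped Nat

section RiemannSum

variable {f : ℝ → ℝ} {x₀ Δ : ℝ} {N : ℕ}

theorem intervalIntegral_eq_mul_integral_comp_add_mul (f : ℝ → ℝ) (x₀ Δ : ℝ) (N : ℕ) :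
    ∫ x in x₀..x₀ + N * Δ, f x = Δ * ∫ y in (0 : ℝ)..N, f (x₀ + y * Δ) := by
  have := intervalIntegral.smul_integral_comp_add_mul f Δ x₀ (a := 0) (b := N)
  simp only [mul_zero, add_zero, smul_eq_mul] at this
  simp only [mul_comm _ Δ, this]

theorem sum_range_comp_add_mul_succ (f : ℝ → ℝ) (x₀ Δ : ℝ) (N : ℕ) :
    ∑ i ∈ Finset.range N, f (x₀ + (i + 1 : ℕ) * Δ) =
      ∑ i ∈ Finset.range N, f (x₀ + i * Δ) + (f (x₀ + N * Δ) - f x₀) := by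
  have h₁ := Finset.sum_range_succ' (fun i : ℕ ↦ f (x₀ + i * Δ)) N
  have h₂ := Finset.sum_range_succ (fun i : ℕ ↦ f (x₀ + i * Δ)) N
  simp only [Nat.cast_zero, zero_mul, add_zero] at h₁
  linarith

theorem monotoneOn_add_mul (x₀ : ℝ) (hΔ : 0 ≤ Δ) (s : Set ℝ) : MonotoneOn (fun y ↦ x₀ + y * Δ) s :=
  fun _ _ _ _ h ↦ add_le_add_right (mul_le_mul_of_nonneg_right h hΔ) x₀

theorem mapsTo_add_mul_Icc (x₀ : ℝ) (hΔ : 0 ≤ Δ) (N : ℕ) :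
    MapsTo (fun y ↦ x₀ + y * Δ) (Icc 0 (0 + N)) (Icc x₀ (x₀ + N * Δ)) := fun y hy ↦ by
  rw [zero_add] at hy; constructor <;> nlinarith [hy.1, hy.2]

theorem MonotoneOn.mul_sum_le_integral (hΔ : 0 ≤ Δ) (hf : MonotoneOn f (Icc x₀ (x₀ + N * Δ))) :
    Δ * ∑ i ∈ Finset.range N, f (x₀ + i * Δ) ≤ ∫ x in x₀..x₀ + N * Δ, f x := by
  rw [intervalIntegral_eq_mul_integral_comp_add_mul]
  gcongr
  simpa using (hf.comp (monotoneOn_add_mul x₀ hΔ _) (mapsTo_add_mul_Icc x₀ hΔ N)).sum_le_integral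

theorem MonotoneOn.integral_le_mul_sum_add (hΔ : 0 ≤ Δ) (hf : MonotoneOn f (Icc x₀ (x₀ + N * Δ))) :
    ∫ x in x₀..x₀ + N * Δ, f x ≤
      Δ * ∑ i ∈ Finset.range N, f (x₀ + i * Δ) + Δ * (f (x₀ + N * Δ) - f x₀) := by
  rw [intervalIntegral_eq_mul_integral_comp_add_mul, ← mul_add, ← sum_range_comp_add_mul_succ]
  gcongr
  simpa using (hf.comp (monotoneOn_add_mul x₀ hΔ _) (mapsTo_add_mul_Icc x₀ hΔ N)).integral_le_sum

theorem AntitoneOn.integral_le_mul_sum (hΔ : 0 ≤ Δ) (hf : AntitoneOn f (Icc x₀ (x₀ + N * Δ))) :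
    ∫ x in x₀..x₀ + N * Δ, f x ≤ Δ * ∑ i ∈ Finset.range N, f (x₀ + i * Δ) := by
  rw [intervalIntegral_eq_mul_integral_comp_add_mul]
  gcongr
  simpa using
    (hf.comp_MonotoneOn (monotoneOn_add_mul x₀ hΔ _) (mapsTo_add_mul_Icc x₀ hΔ N)).integral_le_sum

theorem AntitoneOn.mul_sum_le_integral_add (hΔ : 0 ≤ Δ) (hf : AntitoneOn f (Icc x₀ (x₀ + N * Δ))) :
    Δ * ∑ i ∈ Finset.range N, f (x₀ + i * Δ) ≤
      (∫ x in x₀..x₀ + N * Δ, f x) + Δ * (f x₀ - f (x₀ + N * Δ)) := by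
  rw [intervalIntegral_eq_mul_integral_comp_add_mul]
  calc _ = Δ * ∑ i ∈ Finset.range N, f (x₀ + (i + 1 : ℕ) * Δ) + Δ * (f x₀ - f (x₀ + N * Δ)) := by
        rw [sum_range_comp_add_mul_succ]; ring
    _ ≤ _ := by
      gcongr
      simpa using (hf.comp_MonotoneOn (monotoneOn_add_mul x₀ hΔ _)
        (mapsTo_add_mul_Icc x₀ hΔ N)).sum_le_integral

theorem apply_le_of_unimodal {a m x : ℝ} (ham : a ≤ m) (hmono : MonotoneOn f (Icc a m))
    (hanti : AntitoneOn f (Ici m)) (hx : a ≤ x) : f x ≤ f m := by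
  rcases le_total x m with hxm | hmx
  · exact hmono ⟨hx, hxm⟩ ⟨ham, le_rfl⟩ hxm
  · exact hanti (le_refl m) hmx hmx

/-- Writing `f = u + d - f m` with `u x = f (min x m)` monotone and `d x = f (max x m)` antitone,
the Riemann sums of `u` and `d` err by at most `Δ * f m` each, with opposite signs. -/
theorem abs_mul_sum_sub_integral_le_of_unimodal {a m : ℝ} (ham : a ≤ m)
    (hmono : MonotoneOn f (Icc a m)) (hanti : AntitoneOn f (Ici m))
    (hf₀ : ∀ x ∈ Ici a, 0 ≤ f x) (hx₀ : a ≤ x₀) (hΔ : 0 ≤ Δ) (N : ℕ) :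
    |Δ * ∑ i ∈ Finset.range N, f (x₀ + i * Δ) - ∫ x in x₀..x₀ + N * Δ, f x| ≤ Δ * f m := by
  set c := f m
  set u : ℝ → ℝ := fun x ↦ f (min x m)
  set d : ℝ → ℝ := fun x ↦ f (max x m)
  have hmin : ∀ x ∈ Ici a, min x m ∈ Icc a m := fun x hx ↦ ⟨le_min hx ham, min_le_right x m⟩
  have hu : MonotoneOn u (Ici a) := fun x hx y hy hxy ↦
    hmono (hmin x hx) (hmin y hy) (min_le_min_right m hxy)
  have hd : Antitone d := fun x y hxy ↦
    hanti (le_max_right x m) (le_max_right y m) (max_le_max_right m hxy)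
  have hsplit : ∀ x, f x = u x + (d x - c) := fun x ↦ by
    rcases le_total x m with hxm | hmx
    · simp [u, d, c, min_eq_left hxm, max_eq_right hxm]
    · simp [u, d, c, min_eq_right hmx, max_eq_left hmx]
  have hI : Icc x₀ (x₀ + N * Δ) ⊆ Ici a := fun x hx ↦ hx₀.trans hx.1
  have hxN : x₀ ≤ x₀ + N * Δ := le_add_of_nonneg_right (by positivity)
  have hsum : Δ * ∑ i ∈ Finset.range N, f (x₀ + i * Δ) =
      Δ * ∑ i ∈ Finset.range N, u (x₀ + i * Δ) +
        (Δ * ∑ i ∈ Finset.range N, d (x₀ + i * Δ) - N * Δ * c) := by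
    simp only [hsplit, Finset.sum_add_distrib, Finset.sum_sub_distrib, Finset.sum_const,
      Finset.card_range, nsmul_eq_mul]
    ring
  have hint : ∫ x in x₀..x₀ + N * Δ, f x =
      (∫ x in x₀..x₀ + N * Δ, u x) + ((∫ x in x₀..x₀ + N * Δ, d x) - N * Δ * c) := by
    have hu_int : IntervalIntegrable u volume x₀ (x₀ + N * Δ) :=
      (hu.mono (uIcc_of_le hxN ▸ hI)).intervalIntegrable
    simp only [hsplit]
    rw [intervalIntegral.integral_add hu_int (hd.intervalIntegrable.sub intervalIntegrable_const),
      intervalIntegral.integral_sub hd.intervalIntegrable intervalIntegrable_const,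
      intervalIntegral.integral_const, smul_eq_mul, add_sub_cancel_left]
  have hu_lo := (hu.mono hI).mul_sum_le_integral hΔ
  have hu_hi := (hu.mono hI).integral_le_mul_sum_add hΔ
  have hd_lo := (hd.antitoneOn _).integral_le_mul_sum (x₀ := x₀) (N := N) hΔ
  have hd_hi := (hd.antitoneOn _).mul_sum_le_integral_add (x₀ := x₀) (N := N) hΔ
  have hu_var : Δ * (u (x₀ + N * Δ) - u x₀) ≤ Δ * c := by
    gcongr
    linarith [apply_le_of_unimodal ham hmono hanti (hmin _ (hI ⟨hxN, le_rfl⟩)).1,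
      hf₀ _ (hmin x₀ hx₀).1]
  have hd_var : Δ * (d x₀ - d (x₀ + N * Δ)) ≤ Δ * c := by
    gcongr
    linarith [apply_le_of_unimodal ham hmono hanti (ham.trans (le_max_right x₀ m)),
      hf₀ _ (ham.trans (le_max_right (x₀ + N * Δ) m))]
  rw [hsum, hint, abs_le]
  constructor <;> linarith

theorem intervalIntegral_le_integral_Ioi {b : ℝ} (hfi : IntegrableOn f (Ioi x₀)) (hb : x₀ ≤ b)
    (hf₀ : ∀ x ∈ Ioi b, 0 ≤ f x) : ∫ x in x₀..b, f x ≤ ∫ x in Ioi x₀, f x := by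
  rw [← intervalIntegral.integral_interval_add_Ioi hfi (hfi.mono_set (Ioi_subset_Ioi hb))]
  exact le_add_of_nonneg_right (setIntegral_nonneg measurableSet_Ioi hf₀)

theorem summable_of_unimodal {a m : ℝ} (ham : a ≤ m)
    (hmono : MonotoneOn f (Icc a m)) (hanti : AntitoneOn f (Ici m))
    (hf₀ : ∀ x ∈ Ici a, 0 ≤ f x) (hfi : IntegrableOn f (Ioi x₀)) (hx₀ : a ≤ x₀) (hΔ : 0 < Δ) :
    Summable fun i : ℕ ↦ f (x₀ + i * Δ) := by
  have hpts : ∀ i : ℕ, a ≤ x₀ + i * Δ := fun i ↦ le_add_of_le_of_nonneg hx₀ (by positivity)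
  refine summable_of_sum_range_le (c := ((∫ x in Ioi x₀, f x) + Δ * f m) / Δ)
    (fun i ↦ hf₀ _ (hpts i)) fun N ↦ ?_
  have herr :=
    (abs_le.1 (abs_mul_sum_sub_integral_le_of_unimodal ham hmono hanti hf₀ hx₀ hΔ.le N)).2
  have hint := intervalIntegral_le_integral_Ioi hfi (le_add_of_nonneg_right (by positivity))
    fun x hx ↦ hf₀ x ((hpts N).trans hx.le)
  rw [le_div_iff₀ hΔ, mul_comm]
  linarith

theorem abs_mul_tsum_sub_integral_Ioi_le_of_unimodal {a m : ℝ} (ham : a ≤ m)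
    (hmono : MonotoneOn f (Icc a m)) (hanti : AntitoneOn f (Ici m))
    (hf₀ : ∀ x ∈ Ici a, 0 ≤ f x) (hfi : IntegrableOn f (Ioi x₀)) (hx₀ : a ≤ x₀) (hΔ : 0 < Δ) :
    |Δ * ∑' i : ℕ, f (x₀ + i * Δ) - ∫ x in Ioi x₀, f x| ≤ Δ * f m := by
  have hend : Tendsto (fun N : ℕ ↦ x₀ + N * Δ) atTop atTop :=
    tendsto_atTop_add_const_left _ x₀ (tendsto_natCast_atTop_atTop.atTop_mul_const hΔ)
  have hsum := (summable_of_unimodal ham hmono hanti hf₀ hfi hx₀ hΔ).hasSum.tendsto_sum_nat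
  have hlim := ((hsum.const_mul Δ).sub (intervalIntegral_tendsto_integral_Ioi x₀ hfi hend)).abs
  exact le_of_tendsto' hlim (abs_mul_sum_sub_integral_le_of_unimodal ham hmono hanti hf₀ hx₀ hΔ.le)

theorem abs_mul_tsum_sub_integral_le_of_unimodal {a m : ℝ} (ham : a ≤ m)
    (hmono : MonotoneOn f (Icc a m)) (hanti : AntitoneOn f (Ici m))
    (hf₀ : ∀ x ∈ Ici a, 0 ≤ f x) (hfi : IntegrableOn f (Ioi a)) (hx₀ : x₀ ∈ Icc a (a + Δ))
    (hΔ : 0 < Δ) :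
    |Δ * ∑' i : ℕ, f (x₀ + i * Δ) - ∫ x in Ioi a, f x| ≤ 2 * Δ * f m := by
  have hfi₀ := hfi.mono_set (Ioi_subset_Ioi hx₀.1)
  have htail := abs_le.1 <|
    abs_mul_tsum_sub_integral_Ioi_le_of_unimodal ham hmono hanti hf₀ hfi₀ hx₀.1 hΔ
  have hhead_nonneg : 0 ≤ ∫ x in a..x₀, f x :=
    intervalIntegral.integral_nonneg hx₀.1 fun x hx ↦ hf₀ x hx.1
  have hhead_le : ∫ x in a..x₀, f x ≤ Δ * f m := by
    have hint : IntervalIntegrable f volume a x₀ :=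
      (intervalIntegrable_iff_integrableOn_Ioc_of_le hx₀.1).2 (hfi.mono_set Ioc_subset_Ioi_self)
    calc ∫ x in a..x₀, f x ≤ ∫ _ in a..x₀, f m :=
          intervalIntegral.integral_mono_on hx₀.1 hint intervalIntegrable_const
            fun x hx ↦ apply_le_of_unimodal ham hmono hanti hx.1
      _ = (x₀ - a) * f m := by rw [intervalIntegral.integral_const, smul_eq_mul]
      _ ≤ Δ * f m := by
        gcongr
        · exact hf₀ m ham
        · linarith [hx₀.2]
  rw [← intervalIntegral.integral_interval_add_Ioi hfi hfi₀, abs_le]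
  constructor <;> linarith [htail.1, htail.2]

end RiemannSum

section ErlangDensity

-- The density of the Erlang distribution of shape `n + 1` and rate `ω`, on `[0, ∞)`.
noncomputable def erlangDensity (ω : ℝ) (n : ℕ) (x : ℝ) : ℝ :=
  ω ^ (n + 1) * x ^ n * exp (-ω * x) / n !

variable {ω : ℝ} {n : ℕ}

theorem erlangDensity_nonneg (hω : 0 ≤ ω) {x : ℝ} (hx : 0 ≤ x) : 0 ≤ erlangDensity ω n x := by
  unfold erlangDensity; positivity

theorem hasDerivAt_erlangDensity (x : ℝ) :
    HasDerivAt (erlangDensity ω n)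
      (ω ^ (n + 1) * ((n * x ^ (n - 1) - ω * x ^ n) * exp (-ω * x)) / n !) x := by
  have hexp : HasDerivAt (fun x ↦ exp (-ω * x)) (exp (-ω * x) * -ω) x := by
    simpa using ((hasDerivAt_id x).const_mul (-ω)).exp
  refine ((((hasDerivAt_pow n x).mul hexp).const_mul (ω ^ (n + 1))).div_const (n ! : ℝ)
    |>.congr_deriv (by ring)).congr_of_eventuallyEq (.of_forall fun y ↦ ?_)
  simp only [erlangDensity, Pi.mul_apply]
  ring

theorem erlangDensity_monotoneOn (hω : 0 < ω) : MonotoneOn (erlangDensity ω n) (Icc 0 (n / ω)) := by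
  refine monotoneOn_of_deriv_nonneg (convex_Icc _ _)
    (fun x _ ↦ (hasDerivAt_erlangDensity x).continuousAt.continuousWithinAt)
    (fun x _ ↦ (hasDerivAt_erlangDensity x).differentiableAt.differentiableWithinAt) fun x hx ↦ ?_
  rw [interior_Icc] at hx
  obtain ⟨hx₀, hxn⟩ := hx
  rw [lt_div_iff₀ hω] at hxn
  rw [(hasDerivAt_erlangDensity x).deriv]
  have : ω * x ^ n ≤ n * x ^ (n - 1) := by
    cases n with
    | zero => simp at hxn; nlinarith
    | succ k =>
      rw [Nat.add_sub_cancel, pow_succ', ← mul_assoc, mul_comm ω x]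
      exact mul_le_mul_of_nonneg_right (by linarith) (by positivity)
  have : 0 ≤ n * x ^ (n - 1) - ω * x ^ n := by linarith
  positivity

theorem erlangDensity_antitoneOn (hω : 0 < ω) : AntitoneOn (erlangDensity ω n) (Ici (n / ω)) := by
  refine antitoneOn_of_deriv_nonpos (convex_Ici _)
    (fun x _ ↦ (hasDerivAt_erlangDensity x).continuousAt.continuousWithinAt)
    (fun x _ ↦ (hasDerivAt_erlangDensity x).differentiableAt.differentiableWithinAt) fun x hx ↦ ?_
  rw [interior_Ici, mem_Ioi, div_lt_iff₀ hω] at hx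
  rw [(hasDerivAt_erlangDensity x).deriv]
  have hx₀ : 0 < x := by nlinarith [(n.cast_nonneg : (0 : ℝ) ≤ n)]
  have : n * x ^ (n - 1) ≤ ω * x ^ n := by
    cases n with
    | zero => simp; positivity
    | succ k =>
      rw [Nat.add_sub_cancel, pow_succ', ← mul_assoc, mul_comm ω x]
      exact mul_le_mul_of_nonneg_right (by linarith) (by positivity)
  have : (n * x ^ (n - 1) - ω * x ^ n) * exp (-ω * x) ≤ 0 :=
    mul_nonpos_of_nonpos_of_nonneg (by linarith) (exp_nonneg _)
  exact div_nonpos_of_nonpos_of_nonneg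
    (mul_nonpos_of_nonneg_of_nonpos (by positivity) this) (by positivity)

theorem integral_erlangDensity (hω : 0 < ω) : ∫ x in Ioi 0, erlangDensity ω n x = 1 := by
  have hgamma := integral_rpow_mul_exp_neg_mul_Ioi (a := n + 1) (by positivity) hω
  rw [add_sub_cancel_right, Gamma_nat_eq_factorial] at hgamma
  calc ∫ x in Ioi 0, erlangDensity ω n x
      = ω ^ (n + 1) / n ! * ∫ x in Ioi 0, x ^ (n : ℝ) * exp (-(ω * x)) := by
        rw [← integral_const_mul]
        refine setIntegral_congr_fun measurableSet_Ioi fun x _ ↦ ?_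
        simp only [erlangDensity, rpow_natCast, neg_mul]
        ring
    _ = 1 := by
      rw [hgamma, one_div, inv_rpow hω.le, ← Nat.cast_succ, rpow_natCast]
      field_simp

theorem integrableOn_erlangDensity (hω : 0 < ω) : IntegrableOn (erlangDensity ω n) (Ioi 0) :=
  .of_integral_ne_zero (by rw [integral_erlangDensity hω]; exact one_ne_zero)

theorem erlangDensity_mode_le (hω : 0 < ω) (hn : n ≠ 0) :
    erlangDensity ω n (n / ω) ≤ ω / √(2 * π * n) := by
  have hmode : erlangDensity ω n (n / ω) = ω * ((n / exp 1) ^ n / n !) := by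
    rw [erlangDensity, show -ω * (n / ω) = -n by field_simp, exp_neg, div_pow, div_pow,
      exp_one_pow]
    field_simp
    ring
  have hsqrt : 0 < √(2 * π * n) := by positivity
  rw [hmode, div_eq_mul_one_div ω]
  refine mul_le_mul_of_nonneg_left ?_ hω.le
  rw [div_le_div_iff₀ (by positivity) hsqrt, one_mul, mul_comm]
  exact Stirling.le_factorial_stirling n

theorem tendsto_erlangDensity_mode (hω : 0 < ω) :
    Tendsto (fun n : ℕ ↦ erlangDensity ω n (n / ω)) atTop (𝓝 0) := by
  have hsqrt : Tendsto (fun n : ℕ ↦ √(2 * π * n)) atTop atTop :=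
    tendsto_sqrt_atTop.comp (tendsto_natCast_atTop_atTop.const_mul_atTop (by positivity))
  refine tendsto_of_tendsto_of_tendsto_of_le_of_le' tendsto_const_nhds
    ((tendsto_const_nhds (x := ω)).div_atTop hsqrt) (.of_forall fun n ↦ ?_) ?_
  · exact erlangDensity_nonneg hω.le (by positivity)
  · filter_upwards [eventually_ne_atTop 0] with n hn using erlangDensity_mode_le hω hn

theorem abs_tsum_erlangDensity_sub_inv_le (hω : 0 < ω) {Δ t : ℝ} (hΔ : 0 < Δ)
    (ht : t ∈ Icc 0 Δ) (n : ℕ) :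
    |∑' i : ℕ, erlangDensity ω n (t + i * Δ) - 1 / Δ| ≤ 2 * erlangDensity ω n (n / ω) := by
  have h := abs_mul_tsum_sub_integral_le_of_unimodal (by positivity)
    (erlangDensity_monotoneOn (n := n) hω) (erlangDensity_antitoneOn hω) (fun x hx ↦ erlangDensity_nonneg hω.le hx)
    (integrableOn_erlangDensity hω) (by rwa [zero_add]) hΔ
  rw [integral_erlangDensity hω] at h
  rw [← mul_le_mul_iff_of_pos_left hΔ, ← abs_of_pos hΔ, ← abs_mul, abs_of_pos hΔ, mul_sub,
    mul_one_div_cancel hΔ.ne']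
  linarith

end ErlangDensity

/-- The density of the Erlang arrival time reduced modulo the repair interval becomes
asymptotically uniform: for fixed `t ∈ [0, Δ)`,
`Σ_{i=0}^∞ ω^l (t+iΔ)^{l-1} e^{-ω(t+iΔ)}/(l-1)! → 1/Δ` as `l → ∞`. -/
theorem erlang_mod_density_uniform_limit (ωr Δ t : ℝ) (hω : 0 < ωr) (hΔ : 0 < Δ)
    (ht : t ∈ Set.Ico 0 Δ) :
    Tendsto (fun l : ℕ => ∑' i : ℕ, ωr ^ l * (t + i * Δ) ^ (l - 1) *
        Real.exp (-ωr * (t + i * Δ)) / (l - 1).factorial)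
      atTop (𝓝 (1 / Δ)) := by
  rw [← tendsto_add_atTop_iff_nat 1, tendsto_iff_dist_tendsto_zero]
  refine squeeze_zero (fun _ ↦ dist_nonneg) (fun n ↦ ?_)
    (by simpa using (tendsto_erlangDensity_mode hω).const_mul 2)
  simpa only [Nat.add_sub_cancel, erlangDensity, Real.dist_eq] using
    abs_tsum_erlangDensity_sub_inv_le hω hΔ (Ico_subset_Icc_self ht) n
end
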